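/- arXiv:1007.1957 — 2 statements merged into one kernel-verified Lean document; each statement's English description precedes it below -/
import Mathlib

section
/- Let 1 ≤ p < ∞, 1 ≤ q < ∞ and s ∈ ℝ with (s−1)p ≥ −1. Then almost surely ( Σ_{j≥0} ( Σ_{|n|∼2^j} ⟨n⟩^{sp} |n|^{−p} |g_n|^p )^{q/p} )^{1/q} = ∞; that is, the Fourier–Wiener series u almost surely does not belong to the Fourier–Besov space b̂^s_{p,q}(𝕋). -/
open MeasureTheory ProbabilityTheory Filter

noncomputable section

/-- The family `(gₙ)_{n ∈ ℤ ∖ {0}}` is a family of independent standard complex-valued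
Gaussian random variables: writing `gₙ = aₙ + i bₙ`, all the real and imaginary parts
`aₙ, bₙ` (for `n ≠ 0`) are mutually independent standard real `N(0,1)` Gaussians. -/
def IsStdComplexGaussianFamily {Ω : Type*} [MeasurableSpace Ω] (P : Measure Ω)
    (g : ℤ → Ω → ℂ) : Prop :=
  iIndepFun
    (fun i : {n : ℤ // n ≠ 0} × Bool => fun ω =>
      if i.2 then (g (i.1 : ℤ) ω).re else (g (i.1 : ℤ) ω).im) P ∧
  ∀ i : {n : ℤ // n ≠ 0} × Bool,
    P.map (fun ω => if i.2 then (g (i.1 : ℤ) ω).re else (g (i.1 : ℤ) ω).im)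
      = gaussianReal 0 1

/-- The dyadic block `{n ∈ ℤ : 2^{j-1} < |n| ≤ 2^j}` (i.e. `|n| ∼ 2^j`). -/
def dyadicBlock (j : ℕ) : Finset ℤ :=
  (Finset.Icc (-(2 ^ j : ℤ)) (2 ^ j)).filter fun n => (2 : ℤ) ^ j < 2 * |n| ∧ |n| ≤ 2 ^ j

/-- The `j`-th block piece of the Fourier–Besov norm of the Fourier–Wiener series:
`( Σ_{|n| ∼ 2^j} ⟨n⟩^{sp} |n|^{-p} aₙ^p )^{1/p}`, where `aₙ = |gₙ(ω)|`. -/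
def fbBlock (a : ℤ → ℝ) (p s : ℝ) (j : ℕ) : ℝ :=
  (∑ n ∈ dyadicBlock j,
      (1 + (n : ℝ) ^ 2) ^ (s * p / 2) * |(n : ℝ)| ^ (-p) * a n ^ p) ^ (1 / p)

/-! By the strong law of large numbers applied to the i.i.d. variables `|Re gₙ|^p`, `n ≥ 1`,
the sum of `|Re gₙ|^p` over the positive half `2^j < n ≤ 2^{j+1}` of a dyadic block is almost
surely `(m/2 + o(1)) 2^{j+1}`, where `m > 0` is the `p`-th absolute moment of `N(0,1)`.
On that block the weight `⟨n⟩^{sp} |n|^{-p}` is `≳ |n|^{(s-1)p} ≥ |n|^{-1} ≥ 2^{-(j+1)}`,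
so every block of the norm is eventually bounded below by a positive constant and the `ℓ^q`
sum diverges. -/

open Finset Topology
open scoped NNReal

lemma integrable_abs_rpow_gaussianReal {p : ℝ} (hp : 0 ≤ p) (μ : ℝ) (v : ℝ≥0) :
    Integrable (fun x : ℝ => |x| ^ p) (gaussianReal μ v) := by
  simpa [Real.coe_toNNReal _ hp] using
    (memLp_id_gaussianReal (μ := μ) (v := v) p.toNNReal).integrable_norm_rpow'

lemma integral_abs_rpow_gaussianReal_pos {p : ℝ} (hp : 0 ≤ p) (μ : ℝ) {v : ℝ≥0} (hv : v ≠ 0) :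
    0 < ∫ x, |x| ^ p ∂gaussianReal μ v := by
  rw [integral_pos_iff_support_of_nonneg (fun x => by positivity)
    (integrable_abs_rpow_gaussianReal hp μ v)]
  have hsupp : {(0 : ℝ)}ᶜ ⊆ Function.support fun x : ℝ => |x| ^ p := fun x hx =>
    (Real.rpow_pos_of_pos (abs_pos.2 hx) p).ne'
  have hzero : gaussianReal μ v {0} = 0 :=
    gaussianReal_absolutelyContinuous μ hv (Real.volume_singleton)
  refine lt_of_lt_of_le ?_ (measure_mono hsupp)
  rw [measure_compl (measurableSet_singleton 0) (measure_ne_top _ _), hzero, measure_univ]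
  simp

namespace IsStdComplexGaussianFamily

variable {Ω : Type*} [MeasurableSpace Ω] {P : Measure Ω} {g : ℤ → Ω → ℂ}

lemma map_re (hg : IsStdComplexGaussianFamily P g) {n : ℤ} (hn : n ≠ 0) :
    P.map (fun ω => (g n ω).re) = gaussianReal 0 1 := by
  simpa using hg.2 (⟨n, hn⟩, true)

lemma aemeasurable_re (hg : IsStdComplexGaussianFamily P g) {n : ℤ} (hn : n ≠ 0) :
    AEMeasurable (fun ω => (g n ω).re) P :=
  aemeasurable_of_map_neZero (by rw [hg.map_re hn]; infer_instance)

lemma identDistrib_re (hg : IsStdComplexGaussianFamily P g) {n m : ℤ} (hn : n ≠ 0)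
    (hm : m ≠ 0) : IdentDistrib (fun ω => (g n ω).re) (fun ω => (g m ω).re) P P :=
  ⟨hg.aemeasurable_re hn, hg.aemeasurable_re hm, by rw [hg.map_re hn, hg.map_re hm]⟩

lemma indepFun_re (hg : IsStdComplexGaussianFamily P g) {n m : ℤ} (hn : n ≠ 0) (hm : m ≠ 0)
    (hnm : n ≠ m) : IndepFun (fun ω => (g n ω).re) (fun ω => (g m ω).re) P := by
  simpa using hg.1.indepFun (i := (⟨n, hn⟩, true)) (j := (⟨m, hm⟩, true)) (by simp [hnm])

lemma ae_tendsto_average_abs_re_rpow (hg : IsStdComplexGaussianFamily P g) {p : ℝ}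
    (hp : 0 ≤ p) :
    ∀ᵐ ω ∂P, Tendsto (fun N : ℕ => (∑ i ∈ range N, |(g (i + 1) ω).re| ^ p) / N) atTop
      (𝓝 (∫ x, |x| ^ p ∂gaussianReal 0 1)) := by
  have hne : ∀ i : ℕ, (i : ℤ) + 1 ≠ 0 := fun i => by omega
  have hφ : Measurable fun x : ℝ => |x| ^ p := by fun_prop
  have hmean : ∫ ω, |(g 1 ω).re| ^ p ∂P = ∫ x, |x| ^ p ∂gaussianReal 0 1 := by
    rw [← hg.map_re one_ne_zero, integral_map (hg.aemeasurable_re one_ne_zero)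
      hφ.aestronglyMeasurable]
  have hint : Integrable (fun ω => |(g 1 ω).re| ^ p) P := by
    have := integrable_abs_rpow_gaussianReal hp 0 1
    rw [← hg.map_re one_ne_zero] at this
    exact this.comp_aemeasurable (hg.aemeasurable_re one_ne_zero)
  have hslln := strong_law_ae_real (μ := P) (fun i ω => |(g (i + 1) ω).re| ^ p)
    (by simpa using hint)
    (fun i j hij => (hg.indepFun_re (hne i) (hne j) (by simpa using hij)).comp hφ hφ)
    (fun i => (hg.identDistrib_re (hne i) (hne 0)).comp hφ)
  simpa [hmean] using hslln

end IsStdComplexGaussianFamily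

lemma min_one_two_rpow_mul_le_one_add_sq_rpow {x : ℝ} (hx : 1 ≤ x) (e : ℝ) :
    min 1 ((2 : ℝ) ^ e) * (x ^ 2) ^ e ≤ (1 + x ^ 2) ^ e := by
  rcases le_or_gt 0 e with he | he
  · calc min 1 ((2 : ℝ) ^ e) * (x ^ 2) ^ e ≤ 1 * (x ^ 2) ^ e := by
          gcongr; exact min_le_left 1 _
      _ ≤ (1 + x ^ 2) ^ e := by rw [one_mul]; gcongr; linarith
  · calc min 1 ((2 : ℝ) ^ e) * (x ^ 2) ^ e ≤ 2 ^ e * (x ^ 2) ^ e := by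
          gcongr; exact min_le_right 1 _
      _ = (2 * x ^ 2) ^ e := (Real.mul_rpow zero_le_two (by positivity)).symm
      _ ≤ (1 + x ^ 2) ^ e := Real.rpow_le_rpow_of_nonpos (by positivity) (by nlinarith) he.le

lemma min_one_two_rpow_mul_inv_le_bracket_weight {p s x : ℝ} (hsp : -1 ≤ (s - 1) * p)
    (hx : 1 ≤ x) :
    min 1 ((2 : ℝ) ^ (s * p / 2)) * x⁻¹ ≤ (1 + x ^ 2) ^ (s * p / 2) * x ^ (-p) := by
  have hx0 : 0 < x := one_pos.trans_le hx
  have hpow : (x ^ 2) ^ (s * p / 2) * x ^ (-p) = x ^ ((s - 1) * p) := by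
    rw [← Real.rpow_natCast, ← Real.rpow_mul hx0.le, ← Real.rpow_add hx0]
    ring_nf
  calc min 1 ((2 : ℝ) ^ (s * p / 2)) * x⁻¹
      ≤ min 1 ((2 : ℝ) ^ (s * p / 2)) * x ^ ((s - 1) * p) := by
        gcongr
        rw [← Real.rpow_neg_one]
        exact Real.rpow_le_rpow_of_exponent_le hx hsp
    _ = min 1 ((2 : ℝ) ^ (s * p / 2)) * (x ^ 2) ^ (s * p / 2) * x ^ (-p) := by
        rw [mul_assoc, hpow]
    _ ≤ (1 + x ^ 2) ^ (s * p / 2) * x ^ (-p) := by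
        gcongr; exact min_one_two_rpow_mul_le_one_add_sq_rpow hx _

lemma natCast_add_one_mem_dyadicBlock {j i : ℕ} (hi : i ∈ Ico (2 ^ j) (2 ^ (j + 1))) :
    (i : ℤ) + 1 ∈ dyadicBlock (j + 1) := by
  rw [mem_Ico] at hi
  have hi' : (2 : ℤ) ^ j ≤ i ∧ (i : ℤ) < 2 ^ (j + 1) := by exact_mod_cast hi
  have : (0 : ℤ) < 2 ^ j := by positivity
  simp only [dyadicBlock, mem_filter, mem_Icc, pow_succ] at hi' ⊢
  rw [abs_of_pos (by omega)]
  omega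

lemma one_le_abs_le_of_mem_dyadicBlock {J : ℕ} {n : ℤ} (hn : n ∈ dyadicBlock J) :
    1 ≤ |(n : ℝ)| ∧ |(n : ℝ)| ≤ 2 ^ J := by
  simp only [dyadicBlock, mem_filter] at hn
  have : (0 : ℤ) < 2 ^ J := by positivity
  constructor
  · exact_mod_cast (show (1 : ℤ) ≤ |n| by omega)
  · exact_mod_cast hn.2.2

lemma tendsto_dyadic_block_average {X : ℕ → ℝ} {m : ℝ}
    (h : Tendsto (fun N : ℕ => (∑ i ∈ range N, X i) / N) atTop (𝓝 m)) :
    Tendsto (fun j : ℕ => (∑ i ∈ Ico (2 ^ j) (2 ^ (j + 1)), X i) / 2 ^ (j + 1)) atTop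
      (𝓝 (m / 2)) := by
  have h2 : Tendsto (fun j : ℕ => 2 ^ j) atTop atTop :=
    tendsto_pow_atTop_atTop_of_one_lt one_lt_two
  have key := (h.comp (tendsto_add_atTop_iff_nat 1 |>.2 h2)).sub ((h.comp h2).div_const 2)
  rw [show m / 2 = m - m / 2 by ring]
  refine key.congr fun j => ?_
  simp only [Function.comp_apply, sum_Ico_eq_sub _ (Nat.pow_le_pow_right two_pos j.le_succ)]
  push_cast
  field_simp
  ring

lemma min_one_two_rpow_mul_dyadic_block_average_le_sum {p s : ℝ} (hp : 0 ≤ p)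
    (hsp : -1 ≤ (s - 1) * p) {a b : ℤ → ℝ} (hb : ∀ n, 0 ≤ b n) (hba : ∀ n, b n ≤ a n) (j : ℕ) :
    min 1 ((2 : ℝ) ^ (s * p / 2)) *
        ((∑ i ∈ Ico (2 ^ j : ℕ) (2 ^ (j + 1)), b (i + 1) ^ p) / 2 ^ (j + 1)) ≤
      ∑ n ∈ dyadicBlock (j + 1), (1 + (n : ℝ) ^ 2) ^ (s * p / 2) * |(n : ℝ)| ^ (-p) * a n ^ p := by
  set κ := min 1 ((2 : ℝ) ^ (s * p / 2))
  have hκ : 0 < κ := lt_min one_pos (by positivity)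
  have hweight : ∀ n ∈ dyadicBlock (j + 1),
      κ / 2 ^ (j + 1) ≤ (1 + (n : ℝ) ^ 2) ^ (s * p / 2) * |(n : ℝ)| ^ (-p) := by
    intro n hn
    obtain ⟨h1, h2⟩ := one_le_abs_le_of_mem_dyadicBlock hn
    rw [← sq_abs (n : ℝ), div_eq_mul_inv]
    calc κ * (2 ^ (j + 1))⁻¹ ≤ κ * |(n : ℝ)|⁻¹ := by gcongr
      _ ≤ _ := min_one_two_rpow_mul_inv_le_bracket_weight hsp h1
  have hinj : Set.InjOn (fun i : ℕ => (i : ℤ) + 1) (Ico (2 ^ j) (2 ^ (j + 1))) :=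
    fun i _ i' _ h => by simpa using h
  have hsub :
      (Ico (2 ^ j) (2 ^ (j + 1))).image (fun i : ℕ => (i : ℤ) + 1) ⊆ dyadicBlock (j + 1) :=
    fun n hn => by
      obtain ⟨i, hi, rfl⟩ := mem_image.1 hn
      exact natCast_add_one_mem_dyadicBlock hi
  calc κ * ((∑ i ∈ Ico (2 ^ j : ℕ) (2 ^ (j + 1)), b (i + 1) ^ p) / 2 ^ (j + 1))
      = ∑ n ∈ (Ico (2 ^ j) (2 ^ (j + 1))).image (fun i : ℕ => (i : ℤ) + 1),
          κ / 2 ^ (j + 1) * b n ^ p := by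
        rw [sum_image hinj, sum_div, mul_sum]
        exact sum_congr rfl fun i _ => by ring
    _ ≤ ∑ n ∈ (Ico (2 ^ j) (2 ^ (j + 1))).image (fun i : ℕ => (i : ℤ) + 1),
          (1 + (n : ℝ) ^ 2) ^ (s * p / 2) * |(n : ℝ)| ^ (-p) * a n ^ p := by
        refine sum_le_sum fun n hn => ?_
        have hw := hweight n (hsub hn)
        exact mul_le_mul hw (Real.rpow_le_rpow (hb n) (hba n) hp) (Real.rpow_nonneg (hb n) p)
          ((div_pos hκ (by positivity)).le.trans hw)
    _ ≤ _ := sum_le_sum_of_subset_of_nonneg hsub fun n _ _ => by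
        have := (hb n).trans (hba n); positivity

lemma ENNReal.tsum_ofReal_eq_top_of_eventually_le {f : ℕ → ℝ} {c : ℝ} (hc : 0 < c)
    (h : ∀ᶠ j in atTop, c ≤ f j) : ∑' j, ENNReal.ofReal (f j) = ⊤ := by
  by_contra hsum
  have hlt := (ENNReal.tendsto_atTop_zero_of_tsum_ne_top hsum).eventually_lt_const
    (ENNReal.ofReal_pos.2 hc)
  obtain ⟨j, hjc, hj⟩ := (h.and hlt).exists
  exact (ENNReal.ofReal_le_ofReal hjc).not_gt hj

theorem brownian_not_in_FourierBesov_general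
    {Ω : Type*} [MeasurableSpace Ω] (P : Measure Ω)
    (g : ℤ → Ω → ℂ) (hg : IsStdComplexGaussianFamily P g)
    (p q s : ℝ) (hp : 1 ≤ p) (hq : 1 ≤ q) (hsp : -1 ≤ (s - 1) * p) :
    ∀ᵐ ω ∂P,
      (∑' j : ℕ,
        ENNReal.ofReal (fbBlock (fun n => ‖g n ω‖) p s j ^ q)) = ⊤ := by
  set κ := min 1 ((2 : ℝ) ^ (s * p / 2))
  set m := ∫ x, |x| ^ p ∂gaussianReal 0 1
  have hκm : 0 < κ * (m / 2) :=
    mul_pos (lt_min one_pos (by positivity))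
      (half_pos (integral_abs_rpow_gaussianReal_pos (by linarith) 0 one_ne_zero))
  filter_upwards [hg.ae_tendsto_average_abs_re_rpow (p := p) (by linarith)] with ω hω
  have hblocks : ∀ᶠ j in atTop, κ * (m / 2) / 2 ≤
      ∑ n ∈ dyadicBlock (j + 1),
        (1 + (n : ℝ) ^ 2) ^ (s * p / 2) * |(n : ℝ)| ^ (-p) * ‖g n ω‖ ^ p := by
    filter_upwards [((tendsto_dyadic_block_average hω).const_mul κ).eventually_const_le
      (half_lt_self hκm)] with j hj
    exact hj.trans (min_one_two_rpow_mul_dyadic_block_average_le_sum (a := fun n => ‖g n ω‖)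
      (b := fun n => |(g n ω).re|) (by linarith) hsp (fun n => abs_nonneg _)
      (fun n => Complex.abs_re_le_norm _) j)
  refine ENNReal.tsum_ofReal_eq_top_of_eventually_le (c := ((κ * (m / 2) / 2) ^ (1 / p)) ^ q)
    (by positivity) ?_
  rw [← Filter.map_add_atTop_eq_nat 1, Filter.eventually_map]
  filter_upwards [hblocks] with j hj
  unfold fbBlock
  gcongr

/-- If `1 ≤ p < ∞`, `1 ≤ q < ∞` and `(s-1)p ≥ -1`, then almost surely the
`b̂^s_{p,q}(𝕋)` norm of the Fourier–Wiener series is infinite: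
`Σ_j ( Σ_{|n|∼2^j} ⟨n⟩^{sp} |n|^{-p} |gₙ|^p )^{q/p} = ∞`. -/
theorem brownian_not_in_FourierBesov
    {Ω : Type*} [MeasurableSpace Ω] (P : Measure Ω) [IsProbabilityMeasure P]
    (g : ℤ → Ω → ℂ) (hg : IsStdComplexGaussianFamily P g)
    (p q s : ℝ) (hp : 1 ≤ p) (hq : 1 ≤ q) (hsp : -1 ≤ (s - 1) * p) :
    ∀ᵐ ω ∂P,
      (∑' j : ℕ,
        ENNReal.ofReal (fbBlock (fun n => ‖g n ω‖) p s j ^ q)) = ⊤ :=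
  brownian_not_in_FourierBesov_general P g hg p q s hp hq hsp
end
end

section
/- Let 1 ≤ p < ∞, 1 ≤ q ≤ ∞ and s ∈ ℝ with (s−1)p < −1. Then there exist constants c > 0 and K₀ > 0 such that for all K ≥ K₀, P( ‖ ( Σ_{|n|∼2^j} ⟨n⟩^{sp} |n|^{−p} |g_n|^p )^{1/p} ‖_{ℓ^q_j} > K ) ≤ e^{−cK²}; that is, the b̂^s_{p,q}(𝕋) norm of the Fourier–Wiener series u obeys a Gaussian large deviation estimate. -/
open MeasureTheory ProbabilityTheory Filter

noncomputable section

/-- The Fourier–Besov `b̂^s_{p,q}(𝕋)` norm of the Fourier–Wiener series, as an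
`ℝ≥0∞`-valued quantity: `‖ fbBlock a p s j ‖_{ℓ^q_j}`, with the usual supremum
modification when `q = ∞`. -/
def fbNorm (a : ℤ → ℝ) (p s : ℝ) (q : ENNReal) : ENNReal :=
  if q = ⊤ then ⨆ j : ℕ, ENNReal.ofReal (fbBlock a p s j)
  else (∑' j : ℕ, ENNReal.ofReal (fbBlock a p s j) ^ q.toReal) ^ (1 / q.toReal)

open scoped ENNReal NNReal

/-!
On the event that `‖gₙ‖ ≤ M |n|^ε` for every `n ≠ 0`, the `j`-th dyadic block of the norm is at
most `C M ρ^j` with `ρ = 2^(s + ε - 1 + 1/p) < 1`; the hypothesis `(s - 1) p < -1` is exactly what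
leaves room for some `ε > 0` here. Since `q ≥ 1`, the `ℓ^q` norm of the blocks is at most their
`ℓ¹` norm, so the whole norm is `≤ C M`. Taking `M = K / C`, the event `‖u‖ > K` is therefore
covered by the Gaussian tails `‖gₙ‖ > M |n|^ε`, each of probability
`≤ 4 exp(-M²/16) exp(-|n|^(2ε)/16)`, and the stretched exponentials are summable in `n`.
-/

section GaussianTail

variable {Ω : Type*} [MeasurableSpace Ω] {P : Measure Ω}

lemma hasSubgaussianMGF_of_map_eq_gaussianReal {X : Ω → ℝ} {v : ℝ≥0}
    (hX : P.map X = gaussianReal 0 v) : HasSubgaussianMGF X v P := by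
  have hXm : AEMeasurable X P := aemeasurable_of_map_neZero (by rw [hX]; infer_instance)
  rw [← HasSubgaussianMGF.id_map_iff hXm, hX]
  exact ⟨integrable_exp_mul_gaussianReal, fun t => by simp [mgf_id_gaussianReal]⟩

lemma measure_le_abs_le_of_map_eq_gaussianReal [IsFiniteMeasure P] {X : Ω → ℝ} {v : ℝ≥0}
    (hX : P.map X = gaussianReal 0 v) {t : ℝ} (ht : 0 ≤ t) :
    P {ω | t ≤ |X ω|} ≤ ENNReal.ofReal (2 * Real.exp (-t ^ 2 / (2 * v))) := by
  have hsub := hasSubgaussianMGF_of_map_eq_gaussianReal hX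
  have hsplit : {ω | t ≤ |X ω|} = {ω | t ≤ X ω} ∪ {ω | t ≤ (-X) ω} := by
    ext ω; simp [le_abs]
  calc P {ω | t ≤ |X ω|} ≤ P {ω | t ≤ X ω} + P {ω | t ≤ (-X) ω} := by
        rw [hsplit]; exact measure_union_le _ _
    _ = ENNReal.ofReal (P.real {ω | t ≤ X ω} + P.real {ω | t ≤ (-X) ω}) := by
        rw [ENNReal.ofReal_add measureReal_nonneg measureReal_nonneg, ofReal_measureReal,
          ofReal_measureReal]
    _ ≤ ENNReal.ofReal (2 * Real.exp (-t ^ 2 / (2 * v))) := by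
        gcongr
        linarith [hsub.measure_ge_le ht, hsub.neg.measure_ge_le ht]

lemma measure_lt_norm_le_of_map_eq_gaussianReal [IsFiniteMeasure P] {Z : Ω → ℂ}
    (hre : P.map (fun ω => (Z ω).re) = gaussianReal 0 1)
    (him : P.map (fun ω => (Z ω).im) = gaussianReal 0 1) {t : ℝ} (ht : 0 ≤ t) :
    P {ω | t < ‖Z ω‖} ≤ ENNReal.ofReal (4 * Real.exp (-t ^ 2 / 8)) := by
  have hsub : {ω | t < ‖Z ω‖} ⊆ {ω | t / 2 ≤ |(Z ω).re|} ∪ {ω | t / 2 ≤ |(Z ω).im|} := by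
    rintro ω (hω : t < ‖Z ω‖)
    by_contra h
    simp only [Set.mem_union, Set.mem_ofPred_eq, not_or, not_le] at h
    linarith [h.1, h.2, Complex.norm_le_abs_re_add_abs_im (Z ω), hω]
  have hexp : -(t / 2) ^ 2 / (2 * ((1 : ℝ≥0) : ℝ)) = -t ^ 2 / 8 := by push_cast; ring
  calc P {ω | t < ‖Z ω‖}
      ≤ P {ω | t / 2 ≤ |(Z ω).re|} + P {ω | t / 2 ≤ |(Z ω).im|} :=
        (measure_mono hsub).trans (measure_union_le _ _)
    _ ≤ ENNReal.ofReal (2 * Real.exp (-t ^ 2 / 8))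
          + ENNReal.ofReal (2 * Real.exp (-t ^ 2 / 8)) := by
        rw [← hexp]
        exact add_le_add (measure_le_abs_le_of_map_eq_gaussianReal hre (by positivity))
          (measure_le_abs_le_of_map_eq_gaussianReal him (by positivity))
    _ = ENNReal.ofReal (4 * Real.exp (-t ^ 2 / 8)) := by
        rw [← ENNReal.ofReal_add (by positivity) (by positivity)]; ring_nf

end GaussianTail

lemma exp_neg_le_factorial_mul_rpow {x : ℝ} (hx : 0 < x) (k : ℕ) :
    Real.exp (-x) ≤ k.factorial * x ^ (-(k : ℝ)) := by
  rw [Real.rpow_neg hx.le, Real.rpow_natCast, Real.exp_neg, ← div_eq_mul_inv,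
    inv_le_comm₀ (Real.exp_pos x) (by positivity), inv_div]
  exact Real.pow_div_factorial_le_exp _ hx.le k

lemma summable_exp_neg_mul_abs_rpow {a b : ℝ} (ha : 0 < a) (hb : 0 < b) :
    Summable fun n : ℤ => Real.exp (-(a * |(n : ℝ)| ^ b)) := by
  obtain ⟨k, hk⟩ := exists_nat_gt (1 / b)
  have hbk : 1 < b * k := by rwa [div_lt_iff₀ hb, mul_comm] at hk
  refine Summable.of_norm_bounded_eventually
    ((Real.summable_abs_int_rpow hbk).mul_left (k.factorial * a ^ (-(k : ℝ)))) ?_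
  filter_upwards [(Set.finite_singleton (0 : ℤ)).compl_mem_cofinite] with n hn
  have hn : 0 < |(n : ℝ)| := by simpa using hn
  rw [Real.norm_of_nonneg (Real.exp_nonneg _)]
  calc Real.exp (-(a * |(n : ℝ)| ^ b))
      ≤ k.factorial * (a * |(n : ℝ)| ^ b) ^ (-(k : ℝ)) :=
        exp_neg_le_factorial_mul_rpow (by positivity) k
    _ = k.factorial * a ^ (-(k : ℝ)) * |(n : ℝ)| ^ (-(b * k)) := by
        rw [Real.mul_rpow ha.le (by positivity), ← Real.rpow_mul hn.le, mul_neg, mul_assoc]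

lemma ENNReal.tsum_rpow_le_rpow_tsum (x : ℕ → ℝ≥0∞) {r : ℝ} (hr : 1 ≤ r) :
    ∑' j, x j ^ r ≤ (∑' j, x j) ^ r := by
  have hsplit : ∀ y : ℝ≥0∞, y ^ r = y * y ^ (r - 1) := fun y => by
    conv_lhs => rw [← add_sub_cancel 1 r, ENNReal.rpow_add_of_nonneg 1 (r - 1) zero_le_one
      (by linarith), ENNReal.rpow_one]
  calc ∑' j, x j ^ r ≤ ∑' j, x j * (∑' i, x i) ^ (r - 1) := by
        refine ENNReal.tsum_le_tsum fun j => ?_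
        rw [hsplit]
        gcongr
        exact ENNReal.le_tsum j
    _ = (∑' j, x j) ^ r := by rw [ENNReal.tsum_mul_right, ← hsplit]

lemma fbNorm_le_tsum_fbBlock (a : ℤ → ℝ) (p s : ℝ) {q : ℝ≥0∞} (hq : 1 ≤ q) :
    fbNorm a p s q ≤ ∑' j, ENNReal.ofReal (fbBlock a p s j) := by
  rw [fbNorm]
  split_ifs with hqtop
  · exact iSup_le ENNReal.le_tsum
  · have hq' : 1 ≤ q.toReal := by simpa using ENNReal.toReal_mono hqtop hq
    calc (∑' j, ENNReal.ofReal (fbBlock a p s j) ^ q.toReal) ^ (1 / q.toReal)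
        ≤ ((∑' j, ENNReal.ofReal (fbBlock a p s j)) ^ q.toReal) ^ (1 / q.toReal) := by
          gcongr
          exact ENNReal.tsum_rpow_le_rpow_tsum _ hq'
      _ = ∑' j, ENNReal.ofReal (fbBlock a p s j) := by
          rw [one_div, ENNReal.rpow_rpow_inv (by positivity)]

lemma Real.rpow_le_rpow_abs_mul_rpow_of_le_mul {c x y : ℝ} (hc : 1 ≤ c) (hy : 0 < y)
    (hyx : y ≤ c * x) (hxy : x ≤ c * y) (α : ℝ) : x ^ α ≤ c ^ |α| * y ^ α := by
  have hc0 : 0 < c := by linarith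
  rcases le_or_gt 0 α with hα | hα
  · rw [abs_of_nonneg hα, ← Real.mul_rpow hc0.le hy.le]
    exact Real.rpow_le_rpow (by nlinarith) hxy hα
  · have hyx' : y / c ≤ x := by rwa [div_le_iff₀' hc0]
    calc x ^ α ≤ (y / c) ^ α := Real.rpow_le_rpow_of_nonpos (by positivity) hyx' hα.le
      _ = c ^ |α| * y ^ α := by
        rw [abs_of_neg hα, Real.div_rpow hy.le hc0.le, Real.rpow_neg hc0.le]
        ring

lemma abs_bounds_of_mem_dyadicBlock {j : ℕ} {n : ℤ} (hn : n ∈ dyadicBlock j) :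
    (2 : ℝ) ^ j < 2 * |(n : ℝ)| ∧ |(n : ℝ)| ≤ 2 ^ j := by
  simp only [dyadicBlock, Finset.mem_filter] at hn
  exact_mod_cast hn.2

lemma ne_zero_of_mem_dyadicBlock {j : ℕ} {n : ℤ} (hn : n ∈ dyadicBlock j) : n ≠ 0 := by
  rintro rfl
  exact (pow_pos two_pos j).not_gt (by simpa using (abs_bounds_of_mem_dyadicBlock hn).1)

lemma card_dyadicBlock_le (j : ℕ) : ((dyadicBlock j).card : ℝ) ≤ 3 * 2 ^ j := by
  have hcard : (dyadicBlock j).card ≤ 2 * 2 ^ j + 1 := by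
    refine (Finset.card_filter_le _ _).trans_eq ?_
    rw [Int.card_Icc]
    have : (2 : ℤ) ^ j = ((2 ^ j : ℕ) : ℤ) := by push_cast; rfl
    omega
  have h1 : (1 : ℝ) ≤ 2 ^ j := one_le_pow₀ one_le_two
  have : ((dyadicBlock j).card : ℝ) ≤ 2 * 2 ^ j + 1 := by exact_mod_cast hcard
  linarith

lemma one_add_sq_rpow_mul_abs_rpow_le {j : ℕ} {n : ℤ} (hn : n ∈ dyadicBlock j) (s β : ℝ) :
    (1 + (n : ℝ) ^ 2) ^ (s / 2) * |(n : ℝ)| ^ β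
      ≤ 4 ^ |s / 2| * 2 ^ |β| * ((2 : ℝ) ^ j) ^ (s + β) := by
  obtain ⟨hlo, hhi⟩ := abs_bounds_of_mem_dyadicBlock hn
  have hY : (0 : ℝ) < 2 ^ j := by positivity
  have hY1 : (1 : ℝ) ≤ 2 ^ j := one_le_pow₀ one_le_two
  have hsq : (n : ℝ) ^ 2 = |(n : ℝ)| ^ 2 := (sq_abs _).symm
  have hlo2 : ((2 : ℝ) ^ j) ^ 2 ≤ 4 * (1 + (n : ℝ) ^ 2) := by nlinarith
  have hhi2 : 1 + (n : ℝ) ^ 2 ≤ 4 * ((2 : ℝ) ^ j) ^ 2 := by nlinarith [abs_nonneg (n : ℝ)]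
  have h1 : (1 + (n : ℝ) ^ 2) ^ (s / 2) ≤ 4 ^ |s / 2| * ((2 : ℝ) ^ j) ^ s := by
    have := Real.rpow_le_rpow_abs_mul_rpow_of_le_mul (c := 4) (by norm_num) (by positivity)
      hlo2 hhi2 (s / 2)
    rwa [← Real.rpow_natCast_mul hY.le, Nat.cast_ofNat, mul_div_cancel₀ _ two_ne_zero] at this
  have h2 : |(n : ℝ)| ^ β ≤ 2 ^ |β| * ((2 : ℝ) ^ j) ^ β :=
    Real.rpow_le_rpow_abs_mul_rpow_of_le_mul one_le_two hY hlo.le (by linarith) β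
  calc (1 + (n : ℝ) ^ 2) ^ (s / 2) * |(n : ℝ)| ^ β
      ≤ (4 ^ |s / 2| * ((2 : ℝ) ^ j) ^ s) * (2 ^ |β| * ((2 : ℝ) ^ j) ^ β) :=
        mul_le_mul h1 h2 (by positivity) (by positivity)
    _ = 4 ^ |s / 2| * 2 ^ |β| * ((2 : ℝ) ^ j) ^ (s + β) := by
        rw [Real.rpow_add hY]; ring

lemma fbBlock_summand_eq {a p s : ℝ} {n : ℤ} (hn : n ≠ 0) (ha : 0 ≤ a) :
    (1 + (n : ℝ) ^ 2) ^ (s * p / 2) * |(n : ℝ)| ^ (-p) * a ^ p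
      = ((1 + (n : ℝ) ^ 2) ^ (s / 2) * |(n : ℝ)|⁻¹ * a) ^ p := by
  have hn' : 0 < |(n : ℝ)| := by positivity
  rw [Real.mul_rpow (by positivity) ha, Real.mul_rpow (by positivity) (by positivity),
    ← Real.rpow_mul (by positivity), Real.inv_rpow hn'.le, ← Real.rpow_neg hn'.le]
  ring_nf

lemma fbBlock_le_of_forall_le {a : ℤ → ℝ} {p s D : ℝ} {j : ℕ} (hp : 0 < p) (hD : 0 ≤ D)
    (ha : ∀ n, 0 ≤ a n)
    (hle : ∀ n ∈ dyadicBlock j, (1 + (n : ℝ) ^ 2) ^ (s / 2) * |(n : ℝ)|⁻¹ * a n ≤ D) :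
    fbBlock a p s j ≤ ((dyadicBlock j).card : ℝ) ^ (1 / p) * D := by
  have hsum : ∑ n ∈ dyadicBlock j,
      (1 + (n : ℝ) ^ 2) ^ (s * p / 2) * |(n : ℝ)| ^ (-p) * a n ^ p
        ≤ (dyadicBlock j).card * D ^ p := by
    rw [← nsmul_eq_mul]
    refine Finset.sum_le_card_nsmul _ _ _ fun n hn => ?_
    rw [fbBlock_summand_eq (ne_zero_of_mem_dyadicBlock hn) (ha n)]
    exact Real.rpow_le_rpow (mul_nonneg (by positivity) (ha n)) (hle n hn) hp.le
  have hsum_nonneg : 0 ≤ ∑ n ∈ dyadicBlock j,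
      (1 + (n : ℝ) ^ 2) ^ (s * p / 2) * |(n : ℝ)| ^ (-p) * a n ^ p :=
    Finset.sum_nonneg fun n _ => mul_nonneg (by positivity) (Real.rpow_nonneg (ha n) p)
  calc fbBlock a p s j ≤ ((dyadicBlock j).card * D ^ p) ^ (1 / p) :=
        Real.rpow_le_rpow hsum_nonneg hsum (by positivity)
    _ = ((dyadicBlock j).card : ℝ) ^ (1 / p) * D := by
        rw [Real.mul_rpow (by positivity) (by positivity), ← Real.rpow_mul hD,
          mul_one_div_cancel hp.ne', Real.rpow_one]

lemma fbBlock_le_mul_geometric {a : ℤ → ℝ} {p s ε M : ℝ} (hp : 0 < p) (hM : 0 ≤ M)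
    (ha : ∀ n, 0 ≤ a n) (haM : ∀ n, n ≠ 0 → a n ≤ M * |(n : ℝ)| ^ ε) (j : ℕ) :
    fbBlock a p s j
      ≤ 3 ^ (1 / p) * 4 ^ |s / 2| * 2 ^ |ε - 1| * M * ((2 : ℝ) ^ (s + ε - 1 + 1 / p)) ^ j := by
  have hY : (0 : ℝ) < 2 ^ j := by positivity
  set D := M * (4 ^ |s / 2| * 2 ^ |ε - 1| * ((2 : ℝ) ^ j) ^ (s + (ε - 1))) with hD
  have hle : ∀ n ∈ dyadicBlock j, (1 + (n : ℝ) ^ 2) ^ (s / 2) * |(n : ℝ)|⁻¹ * a n ≤ D := by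
    intro n hn
    have hn0 : (n : ℝ) ≠ 0 := by exact_mod_cast ne_zero_of_mem_dyadicBlock hn
    calc (1 + (n : ℝ) ^ 2) ^ (s / 2) * |(n : ℝ)|⁻¹ * a n
        ≤ (1 + (n : ℝ) ^ 2) ^ (s / 2) * |(n : ℝ)|⁻¹ * (M * |(n : ℝ)| ^ ε) := by
          gcongr
          exact haM n (by exact_mod_cast hn0)
      _ = M * ((1 + (n : ℝ) ^ 2) ^ (s / 2) * |(n : ℝ)| ^ (ε - 1)) := by
          rw [Real.rpow_sub_one (abs_ne_zero.mpr hn0)]; ring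
      _ ≤ D := mul_le_mul_of_nonneg_left (one_add_sq_rpow_mul_abs_rpow_le hn s (ε - 1)) hM
  calc fbBlock a p s j
      ≤ ((dyadicBlock j).card : ℝ) ^ (1 / p) * D :=
        fbBlock_le_of_forall_le hp (by positivity) ha hle
    _ ≤ (3 * 2 ^ j) ^ (1 / p) * D := by
        gcongr
        exact card_dyadicBlock_le j
    _ = 3 ^ (1 / p) * 4 ^ |s / 2| * 2 ^ |ε - 1| * M * ((2 : ℝ) ^ (s + ε - 1 + 1 / p)) ^ j := by
        rw [hD, Real.rpow_pow_comm zero_le_two, Real.mul_rpow zero_le_three hY.le,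
          show s + ε - 1 + 1 / p = (s + (ε - 1)) + 1 / p by ring,
          Real.rpow_add hY (s + (ε - 1)) (1 / p)]
        ring

lemma exists_fbNorm_le {p s ε : ℝ} {q : ℝ≥0∞} (hp : 0 < p) (hq : 1 ≤ q)
    (hγ : s + ε - 1 + 1 / p < 0) :
    ∃ C > (0 : ℝ), ∀ (a : ℤ → ℝ) (M : ℝ), 0 ≤ M → (∀ n, 0 ≤ a n) →
      (∀ n, n ≠ 0 → a n ≤ M * |(n : ℝ)| ^ ε) → fbNorm a p s q ≤ ENNReal.ofReal (C * M) := by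
  set ρ : ℝ := 2 ^ (s + ε - 1 + 1 / p)
  have hρ0 : 0 < ρ := by positivity
  have hρ1 : ρ < 1 := Real.rpow_lt_one_of_one_lt_of_neg one_lt_two hγ
  set B : ℝ := 3 ^ (1 / p) * 4 ^ |s / 2| * 2 ^ |ε - 1|
  refine ⟨B * (1 - ρ)⁻¹, mul_pos (by positivity) (inv_pos.mpr (by linarith)), ?_⟩
  intro a M hM ha haM
  have hgeom : Summable fun j : ℕ => B * M * ρ ^ j :=
    (summable_geometric_of_lt_one hρ0.le hρ1).mul_left _
  calc fbNorm a p s q ≤ ∑' j, ENNReal.ofReal (fbBlock a p s j) := fbNorm_le_tsum_fbBlock a p s hq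
    _ ≤ ∑' j, ENNReal.ofReal (B * M * ρ ^ j) :=
        ENNReal.tsum_le_tsum fun j =>
          ENNReal.ofReal_le_ofReal (fbBlock_le_mul_geometric hp hM ha haM j)
    _ = ENNReal.ofReal (B * (1 - ρ)⁻¹ * M) := by
        rw [← ENNReal.ofReal_tsum_of_nonneg (fun j => by positivity) hgeom, tsum_mul_left,
          tsum_geometric_of_lt_one hρ0.le hρ1]
        ring_nf

section FourierWiener

variable {Ω : Type*} [MeasurableSpace Ω] {P : Measure Ω} {g : ℤ → Ω → ℂ}

lemma IsStdComplexGaussianFamily.map_re_s9 (hg : IsStdComplexGaussianFamily P g) {n : ℤ}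
    (hn : n ≠ 0) : P.map (fun ω => (g n ω).re) = gaussianReal 0 1 := by
  simpa using hg.2 (⟨n, hn⟩, true)

lemma IsStdComplexGaussianFamily.map_im (hg : IsStdComplexGaussianFamily P g) {n : ℤ}
    (hn : n ≠ 0) : P.map (fun ω => (g n ω).im) = gaussianReal 0 1 := by
  simpa using hg.2 (⟨n, hn⟩, false)

lemma IsStdComplexGaussianFamily.measure_mul_abs_rpow_lt_norm_le [IsFiniteMeasure P]
    (hg : IsStdComplexGaussianFamily P g) {n : ℤ} (hn : n ≠ 0) {ε M : ℝ} (hε : 0 < ε)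
    (hM : 1 ≤ M) :
    P {ω | M * |(n : ℝ)| ^ ε < ‖g n ω‖}
      ≤ ENNReal.ofReal
          (4 * Real.exp (-M ^ 2 / 16) * Real.exp (-(1 / 16 * |(n : ℝ)| ^ (2 * ε)))) := by
  have hn1 : 1 ≤ |(n : ℝ)| := by exact_mod_cast Int.one_le_abs hn
  have hx : 1 ≤ |(n : ℝ)| ^ (2 * ε) := Real.one_le_rpow hn1 (by positivity)
  have hsq : (M * |(n : ℝ)| ^ ε) ^ 2 = M ^ 2 * |(n : ℝ)| ^ (2 * ε) := by
    rw [mul_pow, ← Real.rpow_mul_natCast (abs_nonneg _), Nat.cast_ofNat, mul_comm ε]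
  refine (measure_lt_norm_le_of_map_eq_gaussianReal (hg.map_re_s9 hn) (hg.map_im hn)
    (by positivity)).trans (ENNReal.ofReal_le_ofReal ?_)
  rw [mul_assoc, ← Real.exp_add, hsq]
  have hM2 : 1 ≤ M ^ 2 := by nlinarith
  gcongr
  nlinarith [mul_nonneg (sub_nonneg.2 hx) (sub_nonneg.2 hM2)]

lemma IsStdComplexGaussianFamily.measure_exists_lt_norm_le [IsFiniteMeasure P]
    (hg : IsStdComplexGaussianFamily P g) {ε M : ℝ} (hε : 0 < ε) (hM : 1 ≤ M) :
    P {ω | ∃ n : ℤ, n ≠ 0 ∧ M * |(n : ℝ)| ^ ε < ‖g n ω‖}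
      ≤ ENNReal.ofReal (4 * Real.exp (-M ^ 2 / 16) *
          ∑' n : {n : ℤ // n ≠ 0}, Real.exp (-(1 / 16 * |(n : ℝ)| ^ (2 * ε)))) := by
  have hsum : Summable fun n : {n : ℤ // n ≠ 0} => Real.exp (-(1 / 16 * |(n : ℝ)| ^ (2 * ε))) :=
    (summable_exp_neg_mul_abs_rpow (by norm_num) (by positivity)).subtype _
  have hunion : {ω | ∃ n : ℤ, n ≠ 0 ∧ M * |(n : ℝ)| ^ ε < ‖g n ω‖}
      = ⋃ n : {n : ℤ // n ≠ 0}, {ω | M * |(n : ℝ)| ^ ε < ‖g n ω‖} := by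
    ext ω; simp
  calc P {ω | ∃ n : ℤ, n ≠ 0 ∧ M * |(n : ℝ)| ^ ε < ‖g n ω‖}
      ≤ ∑' n : {n : ℤ // n ≠ 0}, P {ω | M * |(n : ℝ)| ^ ε < ‖g n ω‖} :=
        hunion ▸ measure_iUnion_le _
    _ ≤ ∑' n : {n : ℤ // n ≠ 0}, ENNReal.ofReal
          (4 * Real.exp (-M ^ 2 / 16) * Real.exp (-(1 / 16 * |(n : ℝ)| ^ (2 * ε)))) :=
        ENNReal.tsum_le_tsum fun n => hg.measure_mul_abs_rpow_lt_norm_le n.2 hε hM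
    _ = _ := by
        rw [← ENNReal.ofReal_tsum_of_nonneg (fun n => by positivity) (hsum.mul_left _),
          tsum_mul_left]

lemma IsStdComplexGaussianFamily.exists_measure_ofReal_lt_fbNorm_le [IsFiniteMeasure P]
    (hg : IsStdComplexGaussianFamily P g) {p s : ℝ} {q : ℝ≥0∞} (hp : 0 < p) (hq : 1 ≤ q)
    (hs : s - 1 + 1 / p < 0) :
    ∃ C > (0 : ℝ), ∃ A : ℝ, ∀ K ≥ C,
      P {ω | ENNReal.ofReal K < fbNorm (fun n => ‖g n ω‖) p s q}
        ≤ ENNReal.ofReal (A * Real.exp (-(1 / (16 * C ^ 2)) * K ^ 2)) := by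
  set ε := -(s - 1 + 1 / p) / 2 with hε_def
  have hε : 0 < ε := by linarith
  obtain ⟨C, hC, hnorm⟩ := exists_fbNorm_le hp hq (show s + ε - 1 + 1 / p < 0 by linarith)
  refine ⟨C, hC, 4 * ∑' n : {n : ℤ // n ≠ 0}, Real.exp (-(1 / 16 * |(n : ℝ)| ^ (2 * ε))),
    fun K hK => ?_⟩
  have hM : 1 ≤ K / C := by rwa [le_div_iff₀ hC, one_mul]
  have hsub : {ω | ENNReal.ofReal K < fbNorm (fun n => ‖g n ω‖) p s q}
      ⊆ {ω | ∃ n : ℤ, n ≠ 0 ∧ K / C * |(n : ℝ)| ^ ε < ‖g n ω‖} := by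
    intro ω hω
    show ∃ n : ℤ, _
    by_contra! h
    have := hnorm (fun n => ‖g n ω‖) (K / C) (by positivity) (fun n => norm_nonneg _) h
    rw [mul_div_cancel₀ K hC.ne'] at this
    exact (not_le.2 hω) this
  refine (measure_mono hsub).trans ((hg.measure_exists_lt_norm_le hε hM).trans_eq ?_)
  have hexp : -(K / C) ^ 2 / 16 = -(1 / (16 * C ^ 2)) * K ^ 2 := by field_simp
  rw [hexp]
  ring_nf

end FourierWiener

lemma eventually_mul_exp_neg_le_exp_neg_half (A : ℝ) {b : ℝ} (hb : 0 < b) :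
    ∀ᶠ K in atTop, A * Real.exp (-b * K ^ 2) ≤ Real.exp (-(b / 2) * K ^ 2) := by
  have hlim : Tendsto (fun K : ℝ => Real.exp (b / 2 * K ^ 2)) atTop atTop :=
    Real.tendsto_exp_atTop.comp ((tendsto_pow_atTop two_ne_zero).const_mul_atTop (half_pos hb))
  filter_upwards [hlim.eventually_ge_atTop A] with K hK
  calc A * Real.exp (-b * K ^ 2) ≤ Real.exp (b / 2 * K ^ 2) * Real.exp (-b * K ^ 2) :=
        mul_le_mul_of_nonneg_right hK (Real.exp_nonneg _)
    _ = Real.exp (-(b / 2) * K ^ 2) := by rw [← Real.exp_add]; ring_nf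

/-- Large deviation estimate for the `b̂^s_{p,q}(𝕋)` norm of the Fourier–Wiener series:
if `1 ≤ p < ∞`, `1 ≤ q ≤ ∞` and `(s-1)p < -1`, then there are `c > 0` and `K₀ > 0` with
`P( ‖u‖_{b̂^s_{p,q}} > K ) ≤ e^{-cK²}` for all `K ≥ K₀`. -/
theorem brownian_FourierBesov_largeDeviation
    {Ω : Type*} [MeasurableSpace Ω] (P : Measure Ω) [IsProbabilityMeasure P]
    (g : ℤ → Ω → ℂ) (hg : IsStdComplexGaussianFamily P g)
    (p s : ℝ) (q : ENNReal) (hp : 1 ≤ p) (hq : 1 ≤ q) (hsp : (s - 1) * p < -1) :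
    ∃ c > (0 : ℝ), ∃ K₀ > (0 : ℝ), ∀ K ≥ K₀,
      P {ω | ENNReal.ofReal K < fbNorm (fun n => ‖g n ω‖) p s q}
        ≤ ENNReal.ofReal (Real.exp (-c * K ^ 2)) := by
  have hp0 : 0 < p := by linarith
  have hs : s - 1 + 1 / p < 0 := by
    rw [← mul_lt_mul_iff_of_pos_right hp0]
    field_simp
    linarith
  obtain ⟨C, hC, A, hA⟩ := hg.exists_measure_ofReal_lt_fbNorm_le hp0 hq hs
  have hb : 0 < 1 / (16 * C ^ 2) := by positivity
  obtain ⟨K₁, hK₁⟩ := eventually_atTop.1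
    ((eventually_ge_atTop C).and (eventually_mul_exp_neg_le_exp_neg_half A hb))
  refine ⟨_, half_pos hb, max K₁ 1, by positivity, fun K hK => ?_⟩
  obtain ⟨hKC, hexp⟩ := hK₁ K (le_of_max_le_left hK)
  exact (hA K hKC).trans (ENNReal.ofReal_le_ofReal hexp)
end
end
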